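/- arXiv:2408.09299 — 2 statements merged into one kernel-verified Lean document; each statement's English description precedes it below -/
import Mathlib

section
/- Let (Γ, α) be an abstract GKM₃ graph with its unique compatible connection ∇, let v be a vertex, let e, f ∈ E_v be distinct, and let (g_k) be the connection path through e and f, i.e. g₁ = e, g₂ = ∇_{g₁} f, and g_{k+1} = ∇_{g_k} ḡ_{k−1} for k ≥ 2. Then: (a) for every k, the label α(g_k) lies in the ℚ-span of α(e) and α(f) (a condition independent of the choices of signs); (b) the sequence (g_k) is periodic, with some minimal period N ≥ 2; and (c) the connection path does not self-intersect: the vertices i(g₁), …, i(g_N) are pairwise distinct. -/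
namespace GKMQ

/-- `x` equals `y` up to sign (`x` is a "lift" of the class of `y` mod sign). -/
def PM {m : ℕ} (x y : Fin m → ℤ) : Prop := x = y ∨ x = -y

/-- coefficientwise coercion of an integer vector to `ℚ`. -/
def ratQ {m : ℕ} (x : Fin m → ℤ) : Fin m → ℚ := fun i => (x i : ℚ)

/-- An abstract graph: finite vertex and oriented-edge sets, a fixed-point-free
orientation-reversal involution `bar`, no loops; multiple edges are allowed. -/
structure Graph where
  V : Type
  E : Type
  fintypeV : Fintype V
  fintypeE : Fintype E
  src : E → V
  bar : E → E
  bar_invol : ∀ e, bar (bar e) = e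
  bar_ne : ∀ e, bar e ≠ e
  no_loop : ∀ e, src (bar e) ≠ src e

/-- The terminal vertex of an oriented edge. -/
def Graph.tgt (G : Graph) (e : G.E) : G.V := G.src (G.bar e)

/-- A connection on a graph; `map e` is a bijection `E_{i(e)} → E_{t(e)}` with
`∇_e e = ē` and `∇_{ē} = (∇_e)⁻¹` (its values outside `E_{i(e)}` are irrelevant). -/
structure Connection (G : Graph) where
  map : G.E → G.E → G.E
  map_src : ∀ e f, G.src f = G.src e → G.src (map e f) = G.tgt e
  map_self : ∀ e, map e e = G.bar e
  map_bar : ∀ e f, G.src f = G.src e → map (G.bar e) (map e f) = f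

/-- Compatibility of a connection with an edge labeling (mod sign): for every edge `e`
and `f ∈ E_{i(e)}` there are lifts of the labels of `f` and `∇_e f` differing by an
integer multiple of the label of `e`. -/
def CompatibleConn (G : Graph) {m : ℕ} (label : G.E → (Fin m → ℤ)) (C : Connection G) :
    Prop :=
  ∀ e f, G.src f = G.src e →
    ∃ x y : Fin m → ℤ, PM x (label f) ∧ PM y (label (C.map e f)) ∧
      ∃ c : ℤ, y = x + c • label e

/-- An axial function with values in `ℤ^m` modulo sign; `label` is a choice of
representatives, so that all labels are well defined up to sign. -/
structure Axial (G : Graph) (m : ℕ) where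
  label : G.E → (Fin m → ℤ)
  label_bar : ∀ e, PM (label (G.bar e)) (label e)
  indep₂ : ∀ e f, G.src f = G.src e → e ≠ f →
    LinearIndependent ℚ ![ratQ (label e), ratQ (label f)]
  exists_compat : ∃ C : Connection G, CompatibleConn G label C

/-- The GKM_k condition: at every vertex, any `k` of the labels are linearly
independent over `ℚ`. -/
def Axial.IsGKM {G : Graph} {m : ℕ} (A : Axial G m) (k : ℕ) : Prop :=
  ∀ v : G.V, ∀ s : Finset G.E, (∀ e ∈ s, G.src e = v) → s.card = k →
    LinearIndependent ℚ (fun e : {x // x ∈ s} => ratQ (A.label e.1))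

/-- A full quaternionically compatible family of lifts at a vertex `v`: `L` assigns to
every edge at `v` a lift of its label, `ℓ` is a lift of the quaternionic weight, and the
lifts of each quaternionic pair sum to `ℓ`. -/
def QFam (G : Graph) {m : ℕ} (label : G.E → (Fin m → ℤ)) (lam : G.V → (Fin m → ℤ))
    (qpair : G.E → G.E) (v : G.V) (L : G.E → (Fin m → ℤ)) (ℓ : Fin m → ℤ) : Prop :=
  PM ℓ (lam v) ∧ ∀ e, G.src e = v → PM (L e) (label e) ∧ L e + L (qpair e) = ℓ

/-- A partial family `s` of lifts, together with a lift `ℓ` of the quaternionic weight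
at `v`, is quaternionically compatible if it extends to a full family. -/
def QCompat (G : Graph) {m : ℕ} (label : G.E → (Fin m → ℤ)) (lam : G.V → (Fin m → ℤ))
    (qpair : G.E → G.E) (v : G.V) (s : List (G.E × (Fin m → ℤ))) (ℓ : Fin m → ℤ) :
    Prop :=
  ∃ L, QFam G label lam qpair v L ℓ ∧ ∀ p ∈ s, L p.1 = p.2

/-- Condition (2) in the definition of a quaternionic structure on a GKM graph. -/
def QuatCondTwo (G : Graph) {m : ℕ} (label : G.E → (Fin m → ℤ))
    (lam : G.V → (Fin m → ℤ)) (qpair : G.E → G.E) : Prop :=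
  ∃ C : Connection G, CompatibleConn G label C ∧
    (∀ e f, G.src f = G.src e → C.map e (qpair f) = qpair (C.map e f)) ∧
    ∀ e xe lv, QCompat G label lam qpair (G.src e) [(e, xe)] lv →
      ∃ lw, (∃ c : ℤ, lw = lv + c • label e) ∧
        QCompat G label lam qpair (G.tgt e) [(G.bar e, -xe)] lw ∧
        ∀ f, G.src f = G.src e → ∀ xf,
          QCompat G label lam qpair (G.src e) [(e, xe), (f, xf)] lv →
          ∀ y, PM y (label (C.map e f)) → (∃ c : ℤ, y = xf + c • label e) →
            QCompat G label lam qpair (G.tgt e) [(G.bar e, -xe), (C.map e f, y)] lw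

/-- A quaternionic structure on an abstract GKM graph: a quaternionic weight (mod sign)
at every vertex, and a grouping of the edges at each vertex into quaternionic pairs,
subject to conditions (1) (`pair_sum`) and (2) (`cond₂`). -/
structure QuatStructure (G : Graph) {m : ℕ} (A : Axial G m) where
  lam : G.V → (Fin m → ℤ)
  qpair : G.E → G.E
  qpair_src : ∀ e, G.src (qpair e) = G.src e
  qpair_ne : ∀ e, qpair e ≠ e
  qpair_invol : ∀ e, qpair (qpair e) = e
  pair_sum : ∀ e, ∃ x y : Fin m → ℤ, PM x (A.label e) ∧ PM y (A.label (qpair e)) ∧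
    PM (x + y) (lam (G.src e))
  cond₂ : QuatCondTwo G A.label lam qpair

/-- Auxiliary function: consecutive pairs of edges of a connection path. -/
def connAux (G : Graph) (C : Connection G) (e₁ e₂ : G.E) : ℕ → G.E × G.E
  | 0 => (e₁, e₂)
  | n + 1 =>
    let p := connAux G C e₁ e₂ n
    (p.2, C.map p.2 (G.bar p.1))

/-- The connection path with prescribed first two edges `e₁, e₂` (where `t(e₁) = i(e₂)`):
`g 0 = e₁`, `g 1 = e₂`, `g (k+2) = ∇_{g (k+1)} (bar (g k))`. -/
def connPathFrom (G : Graph) (C : Connection G) (e₁ e₂ : G.E) (k : ℕ) : G.E :=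
  (connAux G C e₁ e₂ k).1

/-- The connection path through two edges `e, f` starting at the same vertex:
`g 0 = e`, `g 1 = ∇_e f`, `g (k+2) = ∇_{g (k+1)} (bar (g k))`. -/
def connPath (G : Graph) (C : Connection G) (e f : G.E) : ℕ → G.E :=
  connPathFrom G C e (C.map e f)

def IsPeriod {α : Type*} (g : ℕ → α) (N : ℕ) : Prop := 0 < N ∧ ∀ k, g (k + N) = g k

/-- `N` is the minimal period of the sequence `g`. -/
def MinPeriod {α : Type*} (g : ℕ → α) (N : ℕ) : Prop :=
  IsPeriod g N ∧ ∀ N', IsPeriod g N' → N ≤ N'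

/-- A 2-face (given by its connection path `g`) is quaternionic if at each of its
vertices the two edges of the face based there form a quaternionic pair. -/
def IsQuatPath (G : Graph) {m : ℕ} {A : Axial G m} (Q : QuatStructure G A)
    (g : ℕ → G.E) : Prop :=
  ∀ k, Q.qpair (g (k + 1)) = G.bar (g k)

/-- A noncomplex triangle: a quaternionic 2-face which is a triangle with labels
`±a, ±λ, ±(λ-a)` and quaternionic weights `±λ, ±(λ-a), ±a` at its three vertices. -/
def IsNoncomplexTriangle (G : Graph) {m : ℕ} {A : Axial G m} (Q : QuatStructure G A)
    (g : ℕ → G.E) : Prop :=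
  MinPeriod g 3 ∧ IsQuatPath G Q g ∧
  ∃ a l : Fin m → ℤ,
    PM (A.label (g 0)) a ∧ PM (A.label (g 1)) l ∧ PM (A.label (g 2)) (l - a) ∧
    PM (Q.lam (G.src (g 0))) l ∧ PM (Q.lam (G.src (g 1))) (l - a) ∧
    PM (Q.lam (G.src (g 2))) a

/-- Hypothesis (H): a GKM₃ graph with quaternionic structure all of whose quaternionic
2-faces are biangles or noncomplex triangles and all of whose complex 2-faces are
triangles or quadrangles. -/
def HypH (G : Graph) {m : ℕ} (A : Axial G m) (Q : QuatStructure G A) : Prop :=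
  A.IsGKM 3 ∧
  ∀ C : Connection G, CompatibleConn G A.label C →
    ∀ e f, G.src f = G.src e → f ≠ e →
      ∀ N, MinPeriod (connPath G C e f) N →
        (IsQuatPath G Q (connPath G C e f) →
          N = 2 ∨ IsNoncomplexTriangle G Q (connPath G C e f)) ∧
        (¬ IsQuatPath G Q (connPath G C e f) → N = 3 ∨ N = 4)

/-- A compatible signed structure on a 2-face with edges `g 0, …, g (N-1)`
(indices mod `N`): lifts `γ k` of the labels `α (g k)` such that consecutive lifts
satisfy the connection congruence and are quaternionically compatible at each vertex. -/
def SignedStructureOn (G : Graph) {m : ℕ} (A : Axial G m) (Q : QuatStructure G A)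
    (g : ℕ → G.E) (N : ℕ) (γ : ℕ → (Fin m → ℤ)) : Prop :=
  (∀ k, γ (k + N) = γ k) ∧
  (∀ k, PM (γ k) (A.label (g k))) ∧
  (∀ k, ∃ c : ℤ, γ (k + 2) + γ k = c • γ (k + 1)) ∧
  (∀ k, ∃ ℓ, QCompat G A.label Q.lam Q.qpair (G.tgt (g k))
      [(G.bar (g k), -(γ k)), (g (k + 1), γ (k + 1))] ℓ)

/-- The raw data of a GKM graph with quaternionic structure: vertices, oriented edges,
labels, quaternionic weights (both as chosen representatives mod sign) and quaternionic
pairs. -/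
structure QData (m : ℕ) where
  V : Type
  E : Type
  src : E → V
  bar : E → E
  label : E → (Fin m → ℤ)
  lam : V → (Fin m → ℤ)
  qpair : E → E

/-- The quaternionic GKM data underlying a GKM graph with quaternionic structure. -/
def toQData (G : Graph) {m : ℕ} (A : Axial G m) (Q : QuatStructure G A) : QData m :=
  ⟨G.V, G.E, G.src, G.bar, A.label, Q.lam, Q.qpair⟩

/-- An isomorphism of GKM graphs with quaternionic structure: bijections of vertices and
oriented edges commuting with `src`, `bar` and the quaternionic pairing, and preserving
the labels and the quaternionic weights up to sign. -/
structure QIso {m : ℕ} (D₁ D₂ : QData m) where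
  vmap : D₁.V ≃ D₂.V
  emap : D₁.E ≃ D₂.E
  src_comm : ∀ e, D₂.src (emap e) = vmap (D₁.src e)
  bar_comm : ∀ e, D₂.bar (emap e) = emap (D₁.bar e)
  label_pm : ∀ e, PM (D₂.label (emap e)) (D₁.label e)
  lam_pm : ∀ v, PM (D₂.lam (vmap v)) (D₁.lam v)
  qpair_comm : ∀ e, D₂.qpair (emap e) = emap (D₁.qpair e)

/-- The model graph `Γ_{ℍP}(λ; β₀, …, β_n)` of a torus action on `ℍPⁿ`: vertices
`0, …, n`, two edges between any two distinct vertices `k, l`, labeled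
`±(β_k - β_l)` and `±(λ - β_k - β_l)`, quaternionic weight `±(λ - 2β_k)` at `k`,
the two edges of each biangle forming a quaternionic pair. -/
def modelHP (n : ℕ) {m : ℕ} (lam₀ : Fin m → ℤ) (β : Fin (n + 1) → (Fin m → ℤ)) :
    QData m where
  V := Fin (n + 1)
  E := {p : Fin (n + 1) × Fin (n + 1) // p.1 ≠ p.2} × Bool
  src e := e.1.1.1
  bar e := (⟨(e.1.1.2, e.1.1.1), Ne.symm e.1.2⟩, e.2)
  label e := if e.2 then lam₀ - β e.1.1.1 - β e.1.1.2 else β e.1.1.1 - β e.1.1.2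
  lam k := lam₀ - (2 : ℤ) • β k
  qpair e := (e.1, !e.2)

/-- The 2-element subset `{i, j}` (`i ≠ j`) realized as a sorted pair. -/
def uPair {n : ℕ} (i j : Fin n) (h : i ≠ j) : {p : Fin n × Fin n // p.1 < p.2} :=
  if hlt : i < j then ⟨(i, j), hlt⟩ else ⟨(j, i), h.lt_or_gt.resolve_left hlt⟩

/-- The model graph `Γ_{Gr}(β₁, …, β_n)` of a torus action on `Gr₂(ℂⁿ)`: vertices the
2-element subsets of `{1, …, n}`; an oriented edge `(i, j, k)` from `{i, j}` to `{i, k}`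
for `j ≠ k`, labeled `±(β_j - β_k)`; quaternionic weight `±(β_i - β_j)` at `{i, j}`;
the edges `(i, j, k)` and `(j, i, k)` forming a quaternionic pair at `{i, j}`. -/
def modelGr (n : ℕ) {m : ℕ} (β : Fin n → (Fin m → ℤ)) : QData m where
  V := {p : Fin n × Fin n // p.1 < p.2}
  E := {t : Fin n × Fin n × Fin n // t.1 ≠ t.2.1 ∧ t.1 ≠ t.2.2 ∧ t.2.1 ≠ t.2.2}
  src e := uPair e.1.1 e.1.2.1 e.2.1
  bar e := ⟨(e.1.1, e.1.2.2, e.1.2.1), e.2.2.1, e.2.1, Ne.symm e.2.2.2⟩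
  label e := β e.1.2.1 - β e.1.2.2
  lam v := β v.1.1 - β v.1.2
  qpair e := ⟨(e.1.2.1, e.1.1, e.1.2.2), Ne.symm e.2.1, e.2.2.2, e.2.2.1⟩

/-- A subgraph (with quaternionic structure) of a GKM graph with quaternionic
structure: sets of vertices and of oriented edges closed under `src`, `bar` and the
quaternionic pairing. -/
structure SubData (G : Graph) {m : ℕ} (A : Axial G m) (Q : QuatStructure G A) where
  W : Set G.V
  F : Set G.E
  src_mem : ∀ e ∈ F, G.src e ∈ W
  bar_mem : ∀ e ∈ F, G.bar e ∈ F
  qpair_mem : ∀ e ∈ F, Q.qpair e ∈ F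

/-- The quaternionic GKM data induced on a subgraph. -/
def SubData.toQData {G : Graph} {m : ℕ} {A : Axial G m} {Q : QuatStructure G A}
    (S : SubData G A Q) : QData m where
  V := S.W
  E := S.F
  src e := ⟨G.src e.1, S.src_mem e.1 e.2⟩
  bar e := ⟨G.bar e.1, S.bar_mem e.1 e.2⟩
  label e := A.label e.1
  lam v := Q.lam v.1
  qpair e := ⟨Q.qpair e.1, S.qpair_mem e.1 e.2⟩

/-!
Pairs of consecutive edges of a connection path evolve under `(a, b) ↦ (b, ∇_b ā)`, which is
injective on the finite set of non-backtracking pairs, so the path is periodic; compatibility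
keeps every label in the plane spanned by `α(e)` and `α(f)`. If the path visits a vertex twice,
GKM₃ leaves only the two edges of the face in that plane, so the second visit either repeats the
first, contradicting minimality of the period, or reverses it, which would make the path a
reflection of itself and force it to turn back.
-/

lemma ratQ_neg {m : ℕ} (x : Fin m → ℤ) : ratQ (-x) = -ratQ x := by
  funext i; simp [ratQ]

lemma ratQ_add_zsmul {m : ℕ} (x y : Fin m → ℤ) (c : ℤ) :
    ratQ (x + c • y) = ratQ x + (c : ℚ) • ratQ y := by
  funext i; simp [ratQ]

lemma PM.ratQ_mem {m : ℕ} {x y : Fin m → ℤ} {V : Submodule ℚ (Fin m → ℚ)} (h : PM x y)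
    (hy : ratQ y ∈ V) : ratQ x ∈ V := by
  rcases h with rfl | rfl
  · exact hy
  · rw [ratQ_neg]; exact V.neg_mem hy

lemma PM.symm {m : ℕ} {x y : Fin m → ℤ} (h : PM x y) : PM y x := by
  rcases h with rfl | rfl
  · exact Or.inl rfl
  · exact Or.inr (neg_neg y).symm

lemma _root_.Set.InjOn.mem_periodicPts {α : Type*} {f : α → α} {s : Set α} [Finite s]
    (hmaps : Set.MapsTo f s s) (hinj : Set.InjOn f s) {x : α} (hx : x ∈ s) :
    x ∈ Function.periodicPts f :=
  (show Function.Semiconj Subtype.val (hmaps.restrict f s s) f from fun _ => rfl)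
    |>.mapsTo_periodicPts ((hmaps.restrict_inj.2 hinj).mem_periodicPts ⟨x, hx⟩)

section
variable {G : Graph}

lemma Graph.bar_injective : Function.Injective G.bar :=
  Function.LeftInverse.injective G.bar_invol

def Graph.nonBacktracking (G : Graph) : Set (G.E × G.E) :=
  {p | G.src p.2 = G.tgt p.1 ∧ p.2 ≠ G.bar p.1}

def Graph.reversePair (G : Graph) (p : G.E × G.E) : G.E × G.E := (G.bar p.2, G.bar p.1)

lemma Graph.reversePair_reversePair (p : G.E × G.E) : G.reversePair (G.reversePair p) = p := by
  simp [Graph.reversePair, G.bar_invol]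

lemma Graph.reversePair_ne_self {p : G.E × G.E} (hp : p ∈ G.nonBacktracking) :
    G.reversePair p ≠ p := by
  intro h
  apply hp.2
  rw [← congrArg Prod.fst h, Graph.reversePair, G.bar_invol]

namespace Connection
variable (C : Connection G)

lemma eq_of_map_eq {e f₁ f₂ : G.E} (h₁ : G.src f₁ = G.src e) (h₂ : G.src f₂ = G.src e)
    (h : C.map e f₁ = C.map e f₂) : f₁ = f₂ := by
  rw [← C.map_bar e f₁ h₁, h, C.map_bar e f₂ h₂]

lemma map_ne_bar {e f : G.E} (hf : G.src f = G.src e) (hfe : f ≠ e) :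
    C.map e f ≠ G.bar e := by
  rw [← C.map_self e]
  exact fun h => hfe (C.eq_of_map_eq hf rfl h)

/-- The connection path as an orbit: `next (g k, g (k+1)) = (g (k+1), g (k+2))`. -/
def next (p : G.E × G.E) : G.E × G.E := (p.2, C.map p.2 (G.bar p.1))

lemma connAux_eq_iterate (e₁ e₂ : G.E) (n : ℕ) : connAux G C e₁ e₂ n = C.next^[n] (e₁, e₂) := by
  induction n with
  | zero => rfl
  | succ n ih => rw [Function.iterate_succ_apply', ← ih]; rfl

lemma connPathFrom_eq (e₁ e₂ : G.E) (n : ℕ) :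
    connPathFrom G C e₁ e₂ n = (C.next^[n] (e₁, e₂)).1 := by
  rw [connPathFrom, connAux_eq_iterate]

lemma iterate_next_snd (p : G.E × G.E) (n : ℕ) : (C.next^[n] p).2 = (C.next^[n + 1] p).1 := by
  rw [Function.iterate_succ_apply']; rfl

lemma next_mapsTo : Set.MapsTo C.next G.nonBacktracking G.nonBacktracking := by
  rintro ⟨a, b⟩ ⟨hab, hb⟩
  have hsrc : G.src (G.bar a) = G.src b := hab.symm
  exact ⟨C.map_src b _ hsrc, C.map_ne_bar hsrc (Ne.symm hb)⟩

lemma next_injOn : Set.InjOn C.next G.nonBacktracking := by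
  rintro ⟨a, b⟩ ⟨hab, -⟩ ⟨a', b'⟩ ⟨hab', -⟩ h
  simp only [next, Prod.mk.injEq] at h
  obtain ⟨rfl, h⟩ := h
  exact Prod.ext (G.bar_injective (C.eq_of_map_eq hab.symm hab'.symm h)) rfl

lemma mem_periodicPts_next {p : G.E × G.E} (hp : p ∈ G.nonBacktracking) :
    p ∈ Function.periodicPts C.next :=
  haveI := G.fintypeE
  C.next_injOn.mem_periodicPts C.next_mapsTo hp

/-- A connection path traversed backwards is again a connection path, since `∇_{ē} = ∇_e⁻¹`. -/
lemma next_reversePair_next {p : G.E × G.E} (hp : p ∈ G.nonBacktracking) :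
    C.next (G.reversePair (C.next p)) = G.reversePair p := by
  obtain ⟨a, b⟩ := p
  simp only [next, Graph.reversePair, G.bar_invol, C.map_bar b _ hp.1.symm]

lemma iterate_next_reversePair_iterate_next {p : G.E × G.E} (hp : p ∈ G.nonBacktracking)
    (n : ℕ) : C.next^[n] (G.reversePair (C.next^[n] p)) = G.reversePair p := by
  induction n generalizing p with
  | zero => rfl
  | succ n ih =>
    rw [Function.iterate_succ_apply' C.next n, Function.iterate_succ_apply C.next n p,
      ih (C.next_mapsTo hp), C.next_reversePair_next hp]

lemma reversePair_next_ne (p : G.E × G.E) : G.reversePair (C.next p) ≠ p := by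
  intro h
  exact G.bar_ne p.2 (congrArg Prod.snd h)

/-- Otherwise reversal would reflect the path onto itself, fixing either a step or an edge. -/
lemma ne_reversePair_iterate {p : G.E × G.E} (hp : p ∈ G.nonBacktracking) (d : ℕ) :
    p ≠ G.reversePair (C.next^[d] p) := by
  intro h
  obtain ⟨t, rfl | rfl⟩ := Nat.even_or_odd' d
  · have := congrArg C.next^[t] h
    rw [two_mul, Function.iterate_add_apply,
      C.iterate_next_reversePair_iterate_next (C.next_mapsTo.iterate t hp)] at this
    exact G.reversePair_ne_self (C.next_mapsTo.iterate t hp) this.symm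
  · have := congrArg C.next^[t] h
    rw [show 2 * t + 1 = t + (t + 1) by ring, Function.iterate_add_apply,
      Function.iterate_succ_apply',
      C.iterate_next_reversePair_iterate_next
        (C.next_mapsTo (C.next_mapsTo.iterate t hp))] at this
    exact C.reversePair_next_ne _ this.symm

lemma iterate_next_ne_reversePair {p : G.E × G.E} (hp : p ∈ G.nonBacktracking) (j k : ℕ) :
    C.next^[k] p ≠ G.reversePair (C.next^[j] p) := by
  rcases le_total j k with hjk | hkj
  · obtain ⟨d, rfl⟩ := Nat.exists_eq_add_of_le hjk
    intro h
    rw [add_comm, Function.iterate_add_apply] at h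
    refine C.ne_reversePair_iterate (C.next_mapsTo.iterate j hp) d ?_
    rw [h, Graph.reversePair_reversePair]
  · obtain ⟨d, rfl⟩ := Nat.exists_eq_add_of_le hkj
    rw [add_comm, Function.iterate_add_apply]
    exact C.ne_reversePair_iterate (C.next_mapsTo.iterate k hp) d

lemma connPath_eq (e f : G.E) (n : ℕ) :
    connPath G C e f n = (C.next^[n] (e, C.map e f)).1 :=
  C.connPathFrom_eq e _ n

lemma isPeriod_connPathFrom_iff {e₁ e₂ : G.E} {N : ℕ} :
    IsPeriod (connPathFrom G C e₁ e₂) N ↔ 0 < N ∧ Function.IsPeriodicPt C.next N (e₁, e₂) := by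
  simp only [IsPeriod, connPathFrom_eq]
  refine and_congr_right fun _ => ⟨fun h => Prod.ext (by simpa using h 0) ?_, fun h n => ?_⟩
  · rw [iterate_next_snd, add_comm, h 1]; rfl
  · rw [Function.iterate_add_apply, h.eq]

lemma minPeriod_connPathFrom_iff {e₁ e₂ : G.E} (hx : (e₁, e₂) ∈ Function.periodicPts C.next)
    {N : ℕ} :
    MinPeriod (connPathFrom G C e₁ e₂) N ↔ N = Function.minimalPeriod C.next (e₁, e₂) := by
  have hmin : 0 < Function.minimalPeriod C.next (e₁, e₂) ∧
      Function.IsPeriodicPt C.next (Function.minimalPeriod C.next (e₁, e₂)) (e₁, e₂) :=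
    ⟨Function.minimalPeriod_pos_of_mem_periodicPts hx, Function.isPeriodicPt_minimalPeriod _ _⟩
  simp only [MinPeriod, isPeriod_connPathFrom_iff]
  constructor
  · rintro ⟨⟨hN, hper⟩, hle⟩
    exact le_antisymm (hle _ hmin) (hper.minimalPeriod_le hN)
  · rintro rfl
    exact ⟨hmin, fun N' ⟨hN', hper⟩ => hper.minimalPeriod_le hN'⟩

lemma one_lt_minimalPeriod_next {p : G.E × G.E} (hp : p ∈ G.nonBacktracking) :
    1 < Function.minimalPeriod C.next p := by
  refine Nat.one_lt_iff_ne_zero_and_ne_one.2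
    ⟨(Function.minimalPeriod_pos_of_mem_periodicPts (C.mem_periodicPts_next hp)).ne', ?_⟩
  rw [Ne, Function.minimalPeriod_eq_one_iff_isFixedPt]
  intro hfix
  have hsnd : p.2 = p.1 := congrArg Prod.fst hfix
  exact G.no_loop p.1 (hp.1.symm.trans (congrArg G.src hsnd))

end Connection

section
variable {m : ℕ} {A : Axial G m}

lemma Axial.IsGKM.eq_or_eq_of_mem_span (h₃ : A.IsGKM 3) {u v : Fin m → ℚ} {a b c : G.E}
    (hb : G.src b = G.src a) (hc : G.src c = G.src a) (hab : a ≠ b)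
    (ha' : ratQ (A.label a) ∈ Submodule.span ℚ {u, v})
    (hb' : ratQ (A.label b) ∈ Submodule.span ℚ {u, v})
    (hc' : ratQ (A.label c) ∈ Submodule.span ℚ {u, v}) : c = a ∨ c = b := by
  classical
  by_contra! hne
  have hcard : ({a, b, c} : Finset G.E).card = 3 := by
    rw [Finset.card_insert_of_notMem (by simp [hab, hne.1.symm]),
      Finset.card_pair hne.2.symm]
  have hli := h₃ (G.src a) {a, b, c} (by simp [or_imp, forall_and, hb, hc]) hcard
  have hspan : Set.range (fun x : ({a, b, c} : Finset G.E) => ratQ (A.label x)) ≤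
      Submodule.span ℚ (({u, v} : Finset (Fin m → ℚ)) : Set (Fin m → ℚ)) := by
    rintro _ ⟨⟨x, hx⟩, rfl⟩
    simp only [Finset.mem_insert, Finset.mem_singleton] at hx
    rcases hx with rfl | rfl | rfl <;> simpa
  have hle := linearIndependent_le_span_aux' _ hli _ hspan
  simp only [Fintype.card_coe, hcard, Finset.coe_sort_coe] at hle
  exact absurd (hle.trans Finset.card_le_two) (by norm_num)

def Axial.labelsIn (A : Axial G m) (V : Submodule ℚ (Fin m → ℚ)) : Set (G.E × G.E) :=
  {p | ratQ (A.label p.1) ∈ V ∧ ratQ (A.label p.2) ∈ V}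

variable {C : Connection G}

lemma CompatibleConn.ratQ_label_map_mem (hC : CompatibleConn G A.label C)
    {V : Submodule ℚ (Fin m → ℚ)} {e f : G.E} (hfe : G.src f = G.src e)
    (he : ratQ (A.label e) ∈ V) (hf : ratQ (A.label f) ∈ V) :
    ratQ (A.label (C.map e f)) ∈ V := by
  obtain ⟨x, y, hx, hy, c, rfl⟩ := hC e f hfe
  refine hy.symm.ratQ_mem ?_
  rw [ratQ_add_zsmul]
  exact V.add_mem (hx.ratQ_mem hf) (V.smul_mem _ he)

lemma CompatibleConn.next_mapsTo_labelsIn (hC : CompatibleConn G A.label C)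
    (V : Submodule ℚ (Fin m → ℚ)) :
    Set.MapsTo C.next (G.nonBacktracking ∩ A.labelsIn V) (G.nonBacktracking ∩ A.labelsIn V) := by
  rintro ⟨a, b⟩ ⟨hnb, ha, hb⟩
  exact ⟨C.next_mapsTo hnb, hb, hC.ratQ_label_map_mem hnb.1.symm hb ((A.label_bar a).ratQ_mem ha)⟩

variable {u v : Fin m → ℚ} {p : G.E × G.E}

/-- At a vertex of a 2-face, GKM₃ leaves only the two edges of the face in its plane; as the
face cannot run back along itself, both visits of the vertex are the same step. -/
lemma Axial.IsGKM.iterate_next_eq_of_src_snd_eq (h₃ : A.IsGKM 3)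
    (hC : CompatibleConn G A.label C)
    (hp : p ∈ G.nonBacktracking ∩ A.labelsIn (Submodule.span ℚ {u, v})) {j k : ℕ}
    (h : G.src (C.next^[j] p).2 = G.src (C.next^[k] p).2) : C.next^[j] p = C.next^[k] p := by
  obtain ⟨⟨hq, hqne⟩, hq₁, hq₂⟩ := (hC.next_mapsTo_labelsIn _).iterate j hp
  obtain ⟨⟨hr, hrne⟩, hr₁, hr₂⟩ := (hC.next_mapsTo_labelsIn _).iterate k hp
  have hrev := C.iterate_next_ne_reversePair hp.1 j k
  set q := C.next^[j] p
  set r := C.next^[k] p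
  have hface : ∀ c, G.src c = G.src q.2 → ratQ (A.label c) ∈ Submodule.span ℚ {u, v} →
      c = q.2 ∨ c = G.bar q.1 := fun c hc hcV =>
    h₃.eq_or_eq_of_mem_span hq.symm hc hqne hq₂ ((A.label_bar q.1).ratQ_mem hq₁) hcV
  rcases hface r.2 h.symm hr₂ with h₂ | h₂ <;>
    rcases hface (G.bar r.1) (hr.symm.trans h.symm) ((A.label_bar r.1).ratQ_mem hr₁) with
      h₁ | h₁
  · exact absurd (h₂.trans h₁.symm) hrne
  · exact Prod.ext (G.bar_injective h₁).symm h₂.symm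
  · refine absurd (Prod.ext ?_ h₂) hrev
    rw [Graph.reversePair, ← h₁, G.bar_invol]
  · exact absurd (h₂.trans h₁.symm) hrne

lemma Axial.IsGKM.iterate_next_eq_of_src_fst_eq (h₃ : A.IsGKM 3)
    (hC : CompatibleConn G A.label C)
    (hp : p ∈ G.nonBacktracking ∩ A.labelsIn (Submodule.span ℚ {u, v})) {j k : ℕ}
    (h : G.src (C.next^[j] p).1 = G.src (C.next^[k] p).1) : C.next^[j] p = C.next^[k] p := by
  have hP := Function.minimalPeriod_pos_of_mem_periodicPts (C.mem_periodicPts_next hp.1)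
  have hpred : ∀ i, C.next^[i] p = C.next^[i + Function.minimalPeriod C.next p - 1 + 1] p :=
    fun i => by rw [Nat.sub_add_cancel (by omega), Function.iterate_add_minimalPeriod_eq]
  rw [hpred j, hpred k, Function.iterate_succ_apply', Function.iterate_succ_apply',
    h₃.iterate_next_eq_of_src_snd_eq hC hp]
  rwa [C.iterate_next_snd, C.iterate_next_snd, ← hpred, ← hpred]

end
end

/-- Properties of connection paths in an abstract GKM₃ graph: (a) all labels of the path
lie in the ℚ-span of the two initial labels; (b) the path is periodic with minimal period
`N ≥ 2`; (c) the path does not self-intersect. -/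
theorem connection_path_properties (G : Graph) {m : ℕ} (A : Axial G m) (h₃ : A.IsGKM 3)
    (C : Connection G) (hC : CompatibleConn G A.label C)
    (v : G.V) (e f : G.E) (he : G.src e = v) (hf : G.src f = v) (hef : e ≠ f) :
    (∀ k, ratQ (A.label (connPath G C e f k)) ∈
        Submodule.span ℚ {ratQ (A.label e), ratQ (A.label f)}) ∧
    (∃ N, MinPeriod (connPath G C e f) N ∧ 2 ≤ N) ∧
    (∀ N, MinPeriod (connPath G C e f) N →
      ∀ j k, j < N → k < N → j ≠ k →
        G.src (connPath G C e f j) ≠ G.src (connPath G C e f k)) := by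
  have hfe : G.src f = G.src e := hf.trans he.symm
  set W := Submodule.span ℚ {ratQ (A.label e), ratQ (A.label f)}
  have heW : ratQ (A.label e) ∈ W := Submodule.subset_span (Set.mem_insert _ _)
  have hfW : ratQ (A.label f) ∈ W := Submodule.subset_span (Set.mem_insert_of_mem _ rfl)
  have hx₀ : (e, C.map e f) ∈ G.nonBacktracking ∩ A.labelsIn W :=
    ⟨⟨C.map_src e f hfe, C.map_ne_bar hfe hef.symm⟩, heW, hC.ratQ_label_map_mem hfe heW hfW⟩
  have hper := C.mem_periodicPts_next hx₀.1
  refine ⟨fun k => ?_, ⟨_, (C.minPeriod_connPathFrom_iff hper).2 rfl,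
    C.one_lt_minimalPeriod_next hx₀.1⟩, fun N hN j k hj hk hjk hsrc => ?_⟩
  · rw [C.connPath_eq]
    exact ((hC.next_mapsTo_labelsIn _).iterate k hx₀).2.1
  · obtain rfl := (C.minPeriod_connPathFrom_iff hper).1 hN
    rw [C.connPath_eq, C.connPath_eq] at hsrc
    exact hjk ((Function.iterate_eq_iterate_iff_of_lt_minimalPeriod hj hk).1
      (h₃.iterate_next_eq_of_src_fst_eq hC hx₀ hsrc))

end GKMQ
end

section
/- Let (Γ, α) be an abstract GKM₃ graph with a quaternionic structure, let v be a vertex and e ∈ E_v. Then there is at most one edge f ∈ E_v with f ≠ e for which there exist lifts α̃(e), α̃(f) ∈ ℤ^m of α(e), α(f) such that α̃(e) + α̃(f) is a lift of λ(v). Consequently, the partition of E_v into quaternionic pairs, as well as the quaternionically compatible families of lifts at v up to an overall sign, are uniquely determined by the unsigned labels α(g), g ∈ E_v, together with the quaternionic weight λ(v). -/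
/-! Signs are units of `ℤ`. If `λ(v) = ±α(e) ± α(f)` held for two different edges `f`,
subtracting the two expressions would give a relation among three labels at `v` in which
one coefficient is a unit, contradicting GKM₃; so the partner of `e` can only be its
quaternionic pair. Two compatible families have weights differing by a sign `r`, and for a
quaternionic pair `{e, f}` the equation `L' e + L' f = r (L e + L f)`, read in the
independent labels `α(e), α(f)`, forces `L' e = r L e`. -/

section LinearAlgebra

variable {R M : Type*} [Ring R] [AddCommGroup M] [Module R M]

lemma LinearIndependent.units_smul_add_ne_of_triple [Nontrivial R] {a b c : M}
    (h : LinearIndependent R ![a, b, c]) (u w u' w' : Rˣ) :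
    u • a + w • b ≠ u' • a + w' • c := by
  intro huw
  have hrel : ∑ i, ![(u - u' : R), w, -(w' : R)] i • ![a, b, c] i = 0 := by
    simp only [Fin.sum_univ_three, Matrix.cons_val_zero, Matrix.cons_val_one,
      Matrix.cons_val_two, Matrix.head_cons, Matrix.tail_cons]
    simp only [Units.smul_def] at huw
    rw [← sub_eq_zero] at huw
    rw [← huw, sub_smul, neg_smul]
    abel
  exact w.ne_zero (by simpa using Fintype.linearIndependent_iff.mp h _ hrel 1)

lemma LinearIndependent.units_eq_mul_of_pair {a b : M} (h : LinearIndependent R ![a, b])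
    {s t s' t' r : Rˣ} (hst : s' • a + t' • b = r • (s • a + t • b)) : s' = r * s :=
  Units.ext (h.eq_of_pair (s := s') (t := t') (s' := ((r * s : Rˣ) : R))
    (t' := ((r * t : Rˣ) : R))
    (by simpa only [Units.smul_def, Units.val_mul, smul_add, smul_smul] using hst)).1

end LinearAlgebra

namespace GKMQ

lemma linearIndependent_of_ratQ {ι : Type*} {m : ℕ} {v : ι → Fin m → ℤ}
    (h : LinearIndependent ℚ (fun i => ratQ (v i))) : LinearIndependent ℤ v :=
  (h.restrict_scalars' ℤ).of_comp ((Int.castAddHom ℚ).toIntLinearMap.compLeft (Fin m))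

section Signs

variable {m : ℕ}

lemma pm_iff_exists_units {x y : Fin m → ℤ} : PM x y ↔ ∃ u : ℤˣ, x = u • y := by
  constructor
  · rintro (rfl | rfl)
    exacts [⟨1, by simp⟩, ⟨-1, by simp⟩]
  · rintro ⟨u, rfl⟩
    rcases Int.units_eq_one_or u with rfl | rfl <;> simp [PM]

lemma exists_units_smul_of_pm_of_pm {x x' y : Fin m → ℤ} (h : PM x y) (h' : PM x' y) :
    ∃ r : ℤˣ, x' = r • x := by
  obtain ⟨s, rfl⟩ := pm_iff_exists_units.mp h
  obtain ⟨t, rfl⟩ := pm_iff_exists_units.mp h'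
  exact ⟨t * s⁻¹, by rw [mul_smul, inv_smul_smul]⟩

lemma exists_units_of_lift_sum {a b l : Fin m → ℤ}
    (h : ∃ x y, PM x a ∧ PM y b ∧ PM (x + y) l) : ∃ u w : ℤˣ, u • a + w • b = l := by
  obtain ⟨x, y, hx, hy, hl⟩ := h
  obtain ⟨s, rfl⟩ := pm_iff_exists_units.mp hx
  obtain ⟨t, rfl⟩ := pm_iff_exists_units.mp hy
  obtain ⟨r, hr⟩ := pm_iff_exists_units.mp hl
  exact ⟨r⁻¹ * s, r⁻¹ * t, by rw [mul_smul, mul_smul, ← smul_add, hr, inv_smul_smul]⟩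

end Signs

section GKM

variable {G : Graph} {m : ℕ}

lemma Axial.linearIndependent_label_pair (A : Axial G m) {e f : G.E}
    (h : G.src f = G.src e) (hne : e ≠ f) : LinearIndependent ℤ ![A.label e, A.label f] :=
  linearIndependent_of_ratQ (by convert A.indep₂ e f h hne using 1; ext i; fin_cases i <;> rfl)

lemma Axial.IsGKM.linearIndependent_label_triple {A : Axial G m} (h₃ : A.IsGKM 3)
    {v : G.V} {e f g : G.E} (he : G.src e = v) (hf : G.src f = v) (hg : G.src g = v)
    (hef : e ≠ f) (heg : e ≠ g) (hfg : f ≠ g) :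
    LinearIndependent ℤ ![A.label e, A.label f, A.label g] := by
  classical
  have hinj : Function.Injective ![e, f, g] := by
    intro i j
    fin_cases i <;> fin_cases j <;> simp [hef, heg, hfg, hef.symm, heg.symm, hfg.symm]
  have hsrc : ∀ x ∈ Finset.univ.image ![e, f, g], G.src x = v := by
    simp only [Finset.mem_image, Finset.mem_univ, true_and, forall_exists_index]
    rintro _ i rfl
    fin_cases i <;> assumption
  have hcard : (Finset.univ.image ![e, f, g]).card = 3 := by
    rw [Finset.card_image_of_injective _ hinj]; simp
  have li := (h₃ v _ hsrc hcard).comp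
    (fun i => ⟨![e, f, g] i, Finset.mem_image_of_mem _ (Finset.mem_univ i)⟩)
    (fun i j hij => hinj (congrArg Subtype.val hij))
  exact linearIndependent_of_ratQ (by convert li using 1; ext i; fin_cases i <;> rfl)

theorem Axial.IsGKM.eq_of_lift_sum {A : Axial G m} (h₃ : A.IsGKM 3) {v : G.V}
    {e f₁ f₂ : G.E} {l : Fin m → ℤ} (he : G.src e = v) (hf₁ : G.src f₁ = v)
    (hf₂ : G.src f₂ = v) (hne₁ : f₁ ≠ e) (hne₂ : f₂ ≠ e)
    (h₁ : ∃ x y, PM x (A.label e) ∧ PM y (A.label f₁) ∧ PM (x + y) l)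
    (h₂ : ∃ x y, PM x (A.label e) ∧ PM y (A.label f₂) ∧ PM (x + y) l) : f₁ = f₂ := by
  by_contra hne
  obtain ⟨u₁, w₁, h₁⟩ := exists_units_of_lift_sum h₁
  obtain ⟨u₂, w₂, h₂⟩ := exists_units_of_lift_sum h₂
  exact LinearIndependent.units_smul_add_ne_of_triple
    (h₃.linearIndependent_label_triple he hf₁ hf₂ hne₁.symm hne₂.symm hne) u₁ w₁ u₂ w₂
    (h₁.trans h₂.symm)

theorem QFam.exists_units_smul_eq {A : Axial G m} (Q : QuatStructure G A) {v : G.V}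
    {L L' : G.E → Fin m → ℤ} {ℓ ℓ' : Fin m → ℤ} (hL : QFam G A.label Q.lam Q.qpair v L ℓ)
    (hL' : QFam G A.label Q.lam Q.qpair v L' ℓ') :
    ∃ r : ℤˣ, ℓ' = r • ℓ ∧ ∀ e, G.src e = v → L' e = r • L e := by
  obtain ⟨r, hr⟩ := exists_units_smul_of_pm_of_pm hL.1 hL'.1
  refine ⟨r, hr, fun e he => ?_⟩
  have hqe : G.src (Q.qpair e) = v := (Q.qpair_src e).trans he
  obtain ⟨s, hs⟩ := pm_iff_exists_units.mp (hL.2 e he).1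
  obtain ⟨t, ht⟩ := pm_iff_exists_units.mp (hL.2 _ hqe).1
  obtain ⟨s', hs'⟩ := pm_iff_exists_units.mp (hL'.2 e he).1
  obtain ⟨t', ht'⟩ := pm_iff_exists_units.mp (hL'.2 _ hqe).1
  have hsum : s' • A.label e + t' • A.label (Q.qpair e) =
      r • (s • A.label e + t • A.label (Q.qpair e)) := by
    rw [← hs, ← ht, ← hs', ← ht', (hL.2 e he).2, (hL'.2 e he).2, hr]
  have hs'rs := (A.linearIndependent_label_pair (Q.qpair_src e)
    (Q.qpair_ne e).symm).units_eq_mul_of_pair hsum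
  rw [hs', hs, hs'rs, mul_smul]

end GKM

/-- In a GKM₃ graph with quaternionic structure, the quaternionic partner of an edge,
the partition into quaternionic pairs, and (up to an overall sign) the quaternionically
compatible families of lifts at a vertex are uniquely determined by the unsigned edge
labels together with the quaternionic weight. -/
theorem qpair_unique (G : Graph) {m : ℕ} (A : Axial G m) (h₃ : A.IsGKM 3)
    (Q : QuatStructure G A) (v : G.V) :
    (∀ e, G.src e = v →
      ∀ f₁ f₂, G.src f₁ = v → G.src f₂ = v → f₁ ≠ e → f₂ ≠ e →
        (∃ x y, PM x (A.label e) ∧ PM y (A.label f₁) ∧ PM (x + y) (Q.lam v)) →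
        (∃ x y, PM x (A.label e) ∧ PM y (A.label f₂) ∧ PM (x + y) (Q.lam v)) →
        f₁ = f₂) ∧
    (∀ e, G.src e = v → ∀ f, G.src f = v → f ≠ e →
      ((∃ x y, PM x (A.label e) ∧ PM y (A.label f) ∧ PM (x + y) (Q.lam v)) ↔
        f = Q.qpair e)) ∧
    (∀ L ℓ L' ℓ',
      QFam G A.label Q.lam Q.qpair v L ℓ → QFam G A.label Q.lam Q.qpair v L' ℓ' →
      (ℓ' = ℓ ∧ ∀ e, G.src e = v → L' e = L e) ∨
      (ℓ' = -ℓ ∧ ∀ e, G.src e = v → L' e = -(L e))) := by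
  refine ⟨fun e he f₁ f₂ hf₁ hf₂ hne₁ hne₂ => h₃.eq_of_lift_sum he hf₁ hf₂ hne₁ hne₂,
    fun e he f hf hfe => ?_, fun L ℓ L' ℓ' hL hL' => ?_⟩
  · have hpair := he ▸ Q.pair_sum e
    refine ⟨fun hsum => ?_, by rintro rfl; exact hpair⟩
    exact h₃.eq_of_lift_sum he hf ((Q.qpair_src e).trans he) hfe (Q.qpair_ne e) hsum hpair
  · obtain ⟨r, hr, hLr⟩ := hL.exists_units_smul_eq Q hL'
    rcases Int.units_eq_one_or r with rfl | rfl
    · exact Or.inl ⟨by simpa using hr, fun e he => by simpa using hLr e he⟩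
    · exact Or.inr ⟨by simpa using hr, fun e he => by simpa using hLr e he⟩

end GKMQ
end
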